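/- arXiv:2106.01319 — 2 statements merged into one kernel-verified Lean document; each statement's English description precedes it below -/
import Mathlib

section
/- Suppose k ≥ 2 and a = p(k)·q where q is a prime with q > p(k) and 5 ∤ a. Then there exists a unique j > k with p(j) = q, and consequently a lies strictly between p(k)² and p(j)², and a = p(j)·p(k) appears in row j of the T-matrix. -/
noncomputable def Tp (k : ℕ) : ℕ := Nat.nth Nat.Prime (k + 1)

def Tf (n : ℕ) : ℕ := if n % 2 = 0 then 3 * n + 1 else 3 * n + 2

theorem stmt_9 (k a q : ℕ) (hk : 2 ≤ k) (hq : q.Prime) (hqk : Tp k < q)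
    (ha : a = Tp k * q) (h5 : ¬ (5 ∣ a)) :
    ∃! j : ℕ, k < j ∧ Tp j = q ∧ (Tp k) ^ 2 < a ∧ a < (Tp j) ^ 2 ∧
      ∃ n : ℕ, 1 ≤ n ∧ a = Tp j * Tf n := by
  have hinf : (setOf Nat.Prime).Infinite := Nat.infinite_setOf_prime
  have hsm : StrictMono (Nat.nth Nat.Prime) := Nat.nth_strictMono hinf
  set m := Nat.count Nat.Prime q with hm
  have hmq : Nat.nth Nat.Prime m = q := Nat.nth_count hq
  have hkm : k + 1 < m := by
    have := hqk
    rw [← hmq] at this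
    exact hsm.lt_iff_lt.mp this
  refine ⟨m - 1, ⟨by omega, ?_, ?_, ?_, ?_⟩, ?_⟩
  · show Nat.nth Nat.Prime (m - 1 + 1) = q
    rw [show m - 1 + 1 = m by omega, hmq]
  · -- (Tp k)^2 < a
    have hpos : 0 < Tp k := (Nat.prime_nth_prime (k + 1)).pos
    calc (Tp k) ^ 2 = Tp k * Tp k := sq (Tp k)
      _ < Tp k * q := (Nat.mul_lt_mul_left hpos).mpr hqk
      _ = a := ha.symm
  · -- a < (Tp (m-1))^2
    have hTp : Tp (m - 1) = q := by
      show Nat.nth Nat.Prime (m - 1 + 1) = q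
      rw [show m - 1 + 1 = m by omega, hmq]
    rw [hTp, ha, sq]
    exact (Nat.mul_lt_mul_right hq.pos).mpr hqk
  · -- ∃ n
    have hTp : Tp (m - 1) = q := by
      show Nat.nth Nat.Prime (m - 1 + 1) = q
      rw [show m - 1 + 1 = m by omega, hmq]
    have hp : (Tp k).Prime := Nat.prime_nth_prime (k + 1)
    have h5le : 5 ≤ Tp k := by
      have h2 : Nat.nth Nat.Prime 2 = 5 := by
        have : Nat.count Nat.Prime 5 = 2 := by decide
        rw [← this]
        exact Nat.nth_count (by norm_num)
      calc 5 = Nat.nth Nat.Prime 2 := h2.symm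
        _ ≤ Nat.nth Nat.Prime (k + 1) := hsm.le_iff_le.mpr (by omega)
        _ = Tp k := rfl
    have h2d : ¬ 2 ∣ Tp k := by
      intro hd
      have := (Nat.prime_dvd_prime_iff_eq Nat.prime_two hp).mp hd
      omega
    have h3d : ¬ 3 ∣ Tp k := by
      intro hd
      have := (Nat.prime_dvd_prime_iff_eq Nat.prime_three hp).mp hd
      omega
    have h2m : Tp k % 2 ≠ 0 := fun h => h2d (Nat.dvd_of_mod_eq_zero h)
    have h3m : Tp k % 3 ≠ 0 := fun h => h3d (Nat.dvd_of_mod_eq_zero h)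
    have hmod : Tp k % 6 = 1 ∨ Tp k % 6 = 5 := by omega
    rcases hmod with hmod | hmod
    · refine ⟨2 * (Tp k / 6), by omega, ?_⟩
      have : Tf (2 * (Tp k / 6)) = Tp k := by
        unfold Tf
        rw [if_pos (by omega)]
        omega
      rw [this, hTp, ha, Nat.mul_comm]
    · refine ⟨2 * (Tp k / 6) + 1, by omega, ?_⟩
      have : Tf (2 * (Tp k / 6) + 1) = Tp k := by
        unfold Tf
        rw [if_neg (by omega)]
        omega
      rw [this, hTp, ha, Nat.mul_comm]
  · -- uniqueness
    rintro j ⟨-, hj, -⟩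
    have : Nat.nth Nat.Prime (j + 1) = Nat.nth Nat.Prime m := by rw [show Nat.nth Nat.Prime (j+1) = Tp j from rfl, hj, hmq]
    have := hsm.injective this
    omega
end

section
/- For k ≥ 2, every defining element of row k of the T-matrix exceeding p(k)² has the form p(k)·q for a prime q > p(k); consequently the greatest common divisor of any nonempty set of such elements is divisible by p(k), and if the set consists of elements p(k)·q₁ < ... < p(k)·q_r with distinct primes qᵢ > p(k) and r ≥ 2, its gcd equals exactly p(k). -/
lemma Tp_prime (k : ℕ) : (Tp k).Prime := Nat.prime_nth_prime (k + 1)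

theorem stmt_19 (k : ℕ) (hk : 2 ≤ k) :
    (∀ n : ℕ, 1 ≤ n → (Tp k) ^ 2 < Tp k * Tf n → ¬ (5 ∣ Tp k * Tf n) →
      (∃ u v : ℕ, u.Prime ∧ v.Prime ∧ Tp k * Tf n = u * v) →
      ∃ q : ℕ, q.Prime ∧ Tp k < q ∧ Tf n = q) ∧
    (∀ S : Finset ℕ, S.Nonempty →
      (∀ a ∈ S, ∃ q : ℕ, q.Prime ∧ Tp k < q ∧ a = Tp k * q) →
      Tp k ∣ S.gcd id) ∧
    (∀ Q : Finset ℕ, 2 ≤ Q.card → (∀ q ∈ Q, q.Prime ∧ Tp k < q) →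
      (Q.image (fun q => Tp k * q)).gcd id = Tp k) := by
  have hp := Tp_prime k
  have hppos : 0 < Tp k := hp.pos
  refine ⟨?_, ?_, ?_⟩
  · rintro n _ hlt _ ⟨u, v, hu, hv, huv⟩
    have hTflt : Tp k < Tf n := by
      have := (mul_lt_mul_iff_right₀ hppos).mp (by rwa [pow_two] at hlt)
      exact this
    have hdvd : Tp k ∣ u * v := ⟨Tf n, huv.symm⟩
    rcases (Nat.Prime.dvd_mul hp).mp hdvd with h | h
    · have heq : Tp k = u := ((Nat.prime_dvd_prime_iff_eq hp hu).mp h)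
      refine ⟨v, hv, ?_, ?_⟩
      · have : Tf n = v := by
          have := huv; rw [← heq] at this
          exact Nat.eq_of_mul_eq_mul_left hppos this
        · rw [← this]; exact hTflt
      · have := huv; rw [← heq] at this
        exact Nat.eq_of_mul_eq_mul_left hppos this
    · have heq : Tp k = v := ((Nat.prime_dvd_prime_iff_eq hp hv).mp h)
      refine ⟨u, hu, ?_, ?_⟩
      · have : Tf n = u := by
          have := huv; rw [mul_comm u v, ← heq] at this
          exact Nat.eq_of_mul_eq_mul_left hppos this
        · rw [← this]; exact hTflt
      · have := huv; rw [mul_comm u v, ← heq] at this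
        exact Nat.eq_of_mul_eq_mul_left hppos this
  · intro S _ hS
    exact Finset.dvd_gcd fun a ha => by
      obtain ⟨q, _, _, rfl⟩ := hS a ha
      exact Dvd.intro q rfl
  · intro Q hcard hQ
    have h1 : (Q.image (fun q => Tp k * q)).gcd id = Q.gcd (fun q => Tp k * q) := by
      rw [Finset.gcd_image]
      rfl
    have h2 : Q.gcd (fun q => Tp k * q) = Tp k * Q.gcd id := by
      simpa using (Finset.gcd_mul_left (a := Tp k) (s := Q) (f := (id : ℕ → ℕ)))
    have h3 : Q.gcd id = 1 := by
      obtain ⟨p, hpQ, q, hqQ, hpq⟩ := Finset.one_lt_card.mp hcard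
      have hd : Q.gcd id ∣ Nat.gcd p q :=
        Nat.dvd_gcd (Finset.gcd_dvd hpQ) (Finset.gcd_dvd hqQ)
      have : Nat.gcd p q = 1 :=
        (Nat.coprime_primes (hQ p hpQ).1 (hQ q hqQ).1).mpr hpq
      exact Nat.eq_one_of_dvd_one (this ▸ hd)
    rw [h1, h2, h3, mul_one]
end
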